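/- arXiv:2112.14632 — 4 statements merged into one kernel-verified Lean document; each statement's English description precedes it below -/
import Mathlib

section
/- For n ≥ 2, the set GL(n,ℝ) of invertible n×n real matrices is an ample subset of the space of all n×n real matrices: the convex hull of each of its two connected components (matrices of positive determinant and matrices of negative determinant) equals the whole matrix space. -/
/-!
`GL(n, ℝ)` is an open cone. If a path component `C` of an open cone has `0` in its convex hull,
witnessed by finitely many `Kᵢ ∈ C`, then for every `A` and large `t` the segment from `Kᵢ` to
`A + t Kᵢ` stays in the cone, so `A + t Kᵢ ∈ C`, and `A` is the same convex combination of the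
`A + t Kᵢ`. To get `0` into the convex hull of the component of `M`: right multiplication by the
rotation `R` by `π` in the plane of coordinates `i, j` preserves that component, so the hull is
stable under `X ↦ (X + X R) / 2`, which kills the columns `i` and `j`; sweeping over all
coordinates takes `M` to `0`.
-/

open Set Filter Matrix
open scoped Convex Pointwise

section OpenCone

variable {E : Type*} [AddCommGroup E] [Module ℝ E] [TopologicalSpace E] [ContinuousAdd E]
  [ContinuousSMul ℝ E] {U : Set E}

theorem eventually_segment_add_smul_subset (hU : IsOpen U)
    (hcone : ∀ c : ℝ, 0 < c → ∀ x ∈ U, c • x ∈ U) {x : E} (hx : x ∈ U) (a : E) :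
    ∀ᶠ t : ℝ in atTop, [x -[ℝ] a + t • x] ⊆ U := by
  have hnear : ∀ᶠ u in nhds (0 : ℝ), x + u • a ∈ U :=
    (by fun_prop : Continuous fun u : ℝ => x + u • a).continuousAt.eventually_mem
      (by simpa using hU.mem_nhds hx)
  obtain ⟨ε, hε, hε'⟩ := Metric.eventually_nhds_iff.mp hnear
  filter_upwards [eventually_ge_atTop 1, eventually_gt_atTop ε⁻¹] with t ht1 htε
  rintro _ ⟨p, q, hp, hq, hpq, rfl⟩
  have hc : 0 < p + q * t := by nlinarith
  -- the point is `(p + q t) • (x + (q / (p + q t)) • a)`, and `q / (p + q t) ≤ t⁻¹ < ε`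
  have hsmall : q / (p + q * t) < ε := by
    calc q / (p + q * t) ≤ t⁻¹ := by
          rw [div_le_iff₀ hc]; field_simp; nlinarith
      _ < ε := inv_lt_of_inv_lt₀ hε htε
  have hpt : p • x + q • (a + t • x) = (p + q * t) • (x + (q / (p + q * t)) • a) := by
    rw [smul_add (p + q * t), smul_smul, mul_div_cancel₀ _ hc.ne']
    module
  rw [hpt]
  refine hcone _ hc _ (hε' ?_)
  rw [Real.dist_eq, sub_zero, abs_of_nonneg (div_nonneg hq hc.le)]
  exact hsmall

theorem convexHull_pathComponentIn_eq_univ (hU : IsOpen U)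
    (hcone : ∀ c : ℝ, 0 < c → ∀ x ∈ U, c • x ∈ U) {x : E}
    (h0 : (0 : E) ∈ convexHull ℝ (pathComponentIn U x)) :
    convexHull ℝ (pathComponentIn U x) = univ := by
  refine eq_univ_of_forall fun a => ?_
  rw [convexHull_eq_union_convexHull_finite_subsets] at h0
  obtain ⟨F, hFC, hF0⟩ := mem_iUnion₂.1 h0
  obtain ⟨t, ht⟩ := ((F.eventually_all).2 fun y hy =>
    eventually_segment_add_smul_subset hU hcone (pathComponentIn_subset (hFC hy)) a).exists
  have hsub : a +ᵥ t • (F : Set E) ⊆ pathComponentIn U x := by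
    rintro _ ⟨_, ⟨y, hy, rfl⟩, rfl⟩
    exact (hFC hy).trans (JoinedIn.of_segment_subset (ht y hy))
  have ha : a ∈ a +ᵥ t • convexHull ℝ (F : Set E) := by
    simpa using vadd_mem_vadd_set (a := a) (smul_mem_smul_set (a := t) hF0)
  rw [← convexHull_smul, ← convexHull_vadd] at ha
  exact convexHull_mono hsub ha

end OpenCone

section Rotation

variable {A : Type*} [Ring A] [Algebra ℝ A] (P Q : A)

/-- For `P` the projection onto a coordinate plane and `Q` its quarter turn, this is the rotation
by `θ` in that plane. -/
noncomputable def planeRotation (θ : ℝ) : A := 1 + (Real.cos θ - 1) • P + Real.sin θ • Q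

variable {P Q}

theorem planeRotation_mul_planeRotation_neg (hPP : P * P = P) (hPQ : P * Q = Q)
    (hQP : Q * P = Q) (hQQ : Q * Q = -P) (θ : ℝ) :
    planeRotation P Q θ * planeRotation P Q (-θ) = 1 := by
  have key : planeRotation P Q θ * planeRotation P Q (-θ) =
      1 + ((Real.cos θ - 1) * (Real.cos θ + 1) + Real.sin θ ^ 2) • P := by
    simp only [planeRotation, Real.cos_neg, Real.sin_neg, add_mul, mul_add, one_mul, mul_one,
      smul_mul_smul, hPP, hPQ, hQP, hQQ]
    module
  rw [key, show (Real.cos θ - 1) * (Real.cos θ + 1) + Real.sin θ ^ 2 = 0 by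
    nlinarith [Real.sin_sq_add_cos_sq θ], zero_smul, add_zero]

theorem planeRotation_pi : planeRotation P Q Real.pi = 1 - (2 : ℝ) • P := by
  simp only [planeRotation, Real.cos_pi, Real.sin_pi, zero_smul, add_zero]
  module

end Rotation

section Nonsingular

variable {ι : Type*} [DecidableEq ι]

noncomputable def coordProjCompl (s : Finset ι) : Matrix ι ι ℝ :=
  diagonal fun k => if k ∈ s then 0 else 1

theorem coordProjCompl_pair {i j : ι} (hij : i ≠ j) :
    coordProjCompl {i, j} = 1 - (single i i 1 + single j j 1) := by
  ext a b
  simp only [coordProjCompl, diagonal_apply, Matrix.sub_apply, Matrix.add_apply, one_apply,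
    single_apply, Finset.mem_insert, Finset.mem_singleton]
  split_ifs <;> grind

variable [Fintype ι]

local notation "𝔾" => Set.ofPred fun A : Matrix ι ι ℝ => Matrix.det A ≠ 0

theorem isOpen_setOf_det_ne_zero : IsOpen 𝔾 :=
  isOpen_ne_fun continuous_id.matrix_det continuous_const

theorem smul_mem_setOf_det_ne_zero {c : ℝ} (hc : 0 < c) {A : Matrix ι ι ℝ} (hA : A ∈ 𝔾) :
    c • A ∈ 𝔾 := by
  simpa [Matrix.det_smul, hc.ne'] using hA

theorem JoinedIn.mul_of_det_ne_zero {M X N : Matrix ι ι ℝ} (hX : JoinedIn 𝔾 M X)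
    (hN : JoinedIn 𝔾 1 N) : JoinedIn 𝔾 M (X * N) := by
  simpa using (hX.mul hN).mono <| Set.mul_subset_iff.2 fun A hA B hB => by
    simpa [Matrix.det_mul] using And.intro hA hB

theorem mul_mem_convexHull_pathComponentIn {M X N : Matrix ι ι ℝ}
    (hX : X ∈ convexHull ℝ (pathComponentIn 𝔾 M)) (hN : JoinedIn 𝔾 1 N) :
    X * N ∈ convexHull ℝ (pathComponentIn 𝔾 M) := by
  have himage := (LinearMap.mulRight ℝ N).image_convexHull (pathComponentIn 𝔾 M)
  refine convexHull_mono ?_ (himage ▸ Set.mem_image_of_mem _ hX)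
  rintro _ ⟨Y, hY, rfl⟩
  exact JoinedIn.mul_of_det_ne_zero hY hN

theorem joinedIn_one_sub_two_smul_single_add_single {i j : ι} (hij : i ≠ j) :
    JoinedIn 𝔾 1 (1 - (2 : ℝ) • (single i i 1 + single j j 1)) := by
  set P : Matrix ι ι ℝ := single i i 1 + single j j 1
  set Q : Matrix ι ι ℝ := single i j 1 - single j i 1
  have hPP : P * P = P := by simp [P, add_mul, mul_add, hij, hij.symm]
  have hPQ : P * Q = Q := by simp [P, Q, add_mul, mul_sub, hij, hij.symm]
  have hQP : Q * P = Q := by simp [P, Q, sub_mul, mul_add, hij, hij.symm]; abel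
  have hQQ : Q * Q = -P := by simp [P, Q, sub_mul, mul_sub, hij, hij.symm]; abel
  have hcont : Continuous (planeRotation P Q) := by unfold planeRotation; fun_prop
  have hjoin := (isPathConnected_range hcont).joinedIn _ (mem_range_self 0) _
    (mem_range_self Real.pi)
  rw [← planeRotation_pi]
  convert hjoin.mono ?_
  · simp [planeRotation]
  rintro _ ⟨θ, rfl⟩
  exact Matrix.det_ne_zero_of_right_inverse
    (planeRotation_mul_planeRotation_neg hPP hPQ hQP hQQ θ)

theorem coordProjCompl_mul (s t : Finset ι) :
    coordProjCompl s * coordProjCompl t = coordProjCompl (s ∪ t) := by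
  simp only [coordProjCompl, diagonal_mul_diagonal, Finset.mem_union]
  congr 1
  ext k
  split_ifs <;> simp_all

theorem coordProjCompl_univ : coordProjCompl (Finset.univ : Finset ι) = 0 := by
  simp [coordProjCompl]

theorem mul_coordProjCompl_pair_mem_convexHull {M X : Matrix ι ι ℝ}
    (hX : X ∈ convexHull ℝ (pathComponentIn 𝔾 M)) {i j : ι} (hij : i ≠ j) :
    X * coordProjCompl {i, j} ∈ convexHull ℝ (pathComponentIn 𝔾 M) := by
  have hR := mul_mem_convexHull_pathComponentIn hX
    (joinedIn_one_sub_two_smul_single_add_single hij)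
  have hmid : X * coordProjCompl {i, j} = (1 / 2 : ℝ) • X +
      (1 / 2 : ℝ) • (X * (1 - (2 : ℝ) • (single i i 1 + single j j 1))) := by
    simp only [coordProjCompl_pair hij, mul_sub, mul_one, mul_smul_comm]
    module
  rw [hmid]
  exact convex_convexHull ℝ _ hX hR (by norm_num) (by norm_num) (by norm_num)

theorem zero_mem_convexHull_pathComponentIn_setOf_det_ne_zero {M : Matrix ι ι ℝ}
    (hM : M ∈ 𝔾) {i j : ι} (hij : i ≠ j) :
    0 ∈ convexHull ℝ (pathComponentIn 𝔾 M) := by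
  have key : ∀ s : Finset ι, M * coordProjCompl (s ∪ {i, j}) ∈
      convexHull ℝ (pathComponentIn 𝔾 M) := by
    intro s
    induction s using Finset.induction_on with
    | empty =>
      simpa using mul_coordProjCompl_pair_mem_convexHull
        (subset_convexHull ℝ _ (mem_pathComponentIn_self hM)) hij
    | insert k s _ ih =>
      by_cases hki : k = i
      · subst hki
        simpa using ih
      · have hstep := mul_coordProjCompl_pair_mem_convexHull ih hki
        rwa [mul_assoc, coordProjCompl_mul,
          show s ∪ {i, j} ∪ {k, i} = insert k s ∪ {i, j} by ext; simp; tauto] at hstep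
  simpa [coordProjCompl_univ] using key Finset.univ

theorem convexHull_pathComponentIn_setOf_det_ne_zero {M : Matrix ι ι ℝ} (hM : M ∈ 𝔾)
    {i j : ι} (hij : i ≠ j) : convexHull ℝ (pathComponentIn 𝔾 M) = univ :=
  convexHull_pathComponentIn_eq_univ isOpen_setOf_det_ne_zero
    (fun _ hc _ hA => smul_mem_setOf_det_ne_zero hc hA)
    (zero_mem_convexHull_pathComponentIn_setOf_det_ne_zero hM hij)

end Nonsingular

/-- For `n ≥ 2`, the set `GL(n, ℝ)` of invertible real `n × n` matrices is an
ample subset of the space of all `n × n` matrices: the convex hull of each of its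
path-components equals the whole matrix space. -/
theorem stmt2 (n : ℕ) (hn : 2 ≤ n) (M : Matrix (Fin n) (Fin n) ℝ) (hM : M.det ≠ 0) :
    convexHull ℝ (pathComponentIn {A : Matrix (Fin n) (Fin n) ℝ | A.det ≠ 0} M) =
      Set.univ :=
  convexHull_pathComponentIn_setOf_det_ne_zero hM
    (i := ⟨0, by omega⟩) (j := ⟨1, by omega⟩) (by simp)
end

section
/- The complement of a linear subspace of codimension at least 2 in ℝⁿ is ample: if V ⊂ ℝⁿ is a linear subspace with dim V ≤ n - 2, then ℝⁿ \ V is path-connected and its convex hull is all of ℝⁿ. -/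
open Set

theorem AmpleSet.convexHull_eq_univ {F : Type*} [AddCommGroup F] [Module ℝ F]
    [TopologicalSpace F] {s : Set F} (hs : AmpleSet s) (hne : s.Nonempty) :
    convexHull ℝ s = univ := by
  obtain ⟨x, hx⟩ := hne
  exact eq_univ_of_univ_subset <| hs x hx ▸ convexHull_mono (connectedComponentIn_subset s x)

theorem Submodule.one_lt_rank_quotient_of_finrank_add_two_le {K F : Type*} [DivisionRing K]
    [AddCommGroup F] [Module K F] [FiniteDimensional K F] (V : Submodule K F)
    (hV : Module.finrank K V + 2 ≤ Module.finrank K F) :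
    1 < Module.rank K (F ⧸ V) := by
  have hsum := V.finrank_quotient_add_finrank
  rw [← Module.finrank_eq_rank]
  exact_mod_cast (by omega : 1 < Module.finrank K (F ⧸ V))

/-- The complement of a linear subspace of codimension at least 2 in `ℝⁿ` is
ample: if `V ⊆ ℝⁿ` is a linear subspace with `dim V ≤ n - 2`, then `ℝⁿ \ V` is
path-connected and its convex hull is all of `ℝⁿ`. -/
theorem stmt4 (n : ℕ) (V : Submodule ℝ (Fin n → ℝ))
    (hV : Module.finrank ℝ V + 2 ≤ n) :
    IsPathConnected ((V : Set (Fin n → ℝ))ᶜ) ∧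
      convexHull ℝ ((V : Set (Fin n → ℝ))ᶜ) = Set.univ := by
  have hcodim : 1 < Module.rank ℝ ((Fin n → ℝ) ⧸ V) :=
    V.one_lt_rank_quotient_of_finrank_add_two_le (by simpa using hV)
  have hpc := isPathConnected_compl_of_one_lt_codim hcodim
  exact ⟨hpc, (AmpleSet.of_one_lt_codim hcodim).convexHull_eq_univ hpc.nonempty⟩
end

section
/- The set H⁻ = {(x,y,z) ∈ ℝ³ : xy - z² < 0} is path-connected and ample: its convex hull equals ℝ³. -/
/-!
Split `H⁻` by the sign of `z`. Each half `H⁻ ∩ {0 ≤ c z}` is star-convex about `(0, 0, c)`,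
because moving towards `(0, 0, c)` shrinks `x y` quadratically while `|z|` stays at least the
corresponding convex combination; the two halves meet at `(1, -1, 0)`. For ampleness, every point
is the midpoint of two points far up and far down the vertical line through it, and these lie
in `H⁻`.
-/

open Set

/-- Symmetric matrices `[[x, z], [z, y]]` with negative determinant, as triples `(x, y, z)`. -/
def indefiniteForms : Set (ℝ × ℝ × ℝ) := {p | p.1 * p.2.1 - p.2.2 ^ 2 < 0}

@[simp]
lemma mem_indefiniteForms {p : ℝ × ℝ × ℝ} : p ∈ indefiniteForms ↔ p.1 * p.2.1 < p.2.2 ^ 2 :=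
  sub_neg (a := p.1 * p.2.1)

lemma starConvex_indefiniteForms_inter {c : ℝ} (hc : c ≠ 0) :
    StarConvex ℝ (0, 0, c) (indefiniteForms ∩ {p | 0 ≤ c * p.2.2}) := by
  rintro ⟨x, y, z⟩ ⟨hp, hcz⟩ a b ha hb hab
  simp only [mem_indefiniteForms, mem_ofPred_eq] at hp hcz
  simp only [Prod.smul_mk, Prod.mk_add_mk, smul_eq_mul, mul_zero, zero_add, mem_inter_iff,
    mem_indefiniteForms, mem_ofPred_eq]
  refine ⟨?_, by nlinarith [mul_nonneg ha (sq_nonneg c), mul_nonneg hb hcz]⟩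
  have hcross : a ^ 2 * c ^ 2 + b ^ 2 * z ^ 2 ≤ (a * c + b * z) ^ 2 := by
    nlinarith [mul_nonneg (mul_nonneg ha hb) hcz]
  rcases hb.eq_or_lt with rfl | hb
  · obtain rfl : a = 1 := by simpa using hab
    simpa using sq_pos_of_ne_zero hc
  · calc b * x * (b * y) = b ^ 2 * (x * y) := by ring
      _ < b ^ 2 * z ^ 2 := by gcongr
      _ ≤ a ^ 2 * c ^ 2 + b ^ 2 * z ^ 2 := le_add_of_nonneg_left (by positivity)
      _ ≤ (a * c + b * z) ^ 2 := hcross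

lemma isPathConnected_indefiniteForms : IsPathConnected indefiniteForms := by
  have halves (c : ℝ) (hc : c ≠ 0) : IsPathConnected (indefiniteForms ∩ {p | 0 ≤ c * p.2.2}) :=
    (starConvex_indefiniteForms_inter hc).isPathConnected ⟨by simp [sq_pos_of_ne_zero hc],
      by simp [mul_self_nonneg]⟩
  have hunion := (halves 1 one_ne_zero).union (halves (-1) (by norm_num))
    ⟨(1, -1, 0), by norm_num⟩
  convert hunion using 1
  ext p
  simp only [mem_union, mem_inter_iff, mem_ofPred_eq, one_mul, neg_mul, neg_nonneg, ← and_or_left,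
    iff_self_and]
  exact fun _ => le_total _ _

lemma mem_convexHull_of_add_mem_of_sub_mem {𝕜 E : Type*} [Field 𝕜] [LinearOrder 𝕜]
    [IsStrictOrderedRing 𝕜] [AddCommGroup E] [Module 𝕜 E] {s : Set E} {x v : E}
    (h₁ : x + v ∈ s) (h₂ : x - v ∈ s) : x ∈ convexHull 𝕜 s := by
  have hmid := convex_convexHull 𝕜 s (subset_convexHull 𝕜 s h₁) (subset_convexHull 𝕜 s h₂)
    one_half_pos.le one_half_pos.le (add_halves (1 : 𝕜))
  convert hmid using 1
  module

lemma convexHull_indefiniteForms : convexHull ℝ indefiniteForms = univ := by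
  refine eq_univ_of_forall fun ⟨x, y, z⟩ =>
    mem_convexHull_of_add_mem_of_sub_mem (v := (0, 0, |x * y| + |z| + 1)) ?_ ?_ <;>
  · simp only [Prod.mk_add_mk, Prod.mk_sub_mk, add_zero, sub_zero, mem_indefiniteForms]
    nlinarith [le_abs_self (x * y), abs_nonneg (x * y), le_abs_self z, neg_abs_le z]

/-- The set `H⁻ = {(x,y,z) ∈ ℝ³ : xy - z² < 0}` is path-connected and ample:
its convex hull equals `ℝ³`. -/
theorem stmt5 :
    IsPathConnected {p : ℝ × ℝ × ℝ | p.1 * p.2.1 - p.2.2 ^ 2 < 0} ∧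
      convexHull ℝ {p : ℝ × ℝ × ℝ | p.1 * p.2.1 - p.2.2 ^ 2 < 0} = Set.univ :=
  ⟨isPathConnected_indefiniteForms, convexHull_indefiniteForms⟩
end

section
/- Let V be a 5-dimensional real vector space, ξ ⊂ V a 4-dimensional subspace, λ ∈ V* with λ|_ξ ≠ 0, and let ω₁, ω₂ ∈ Λ²ξ* be linearly independent 2-forms whose restrictions to the 3-dimensional hyperplane ξ ∩ ker λ are linearly independent. Then the affine map Ψ: ξ* × ξ* → ℝ³ sending (β₁, β₂) to ((ω₁ + λ∧β₁)², (ω₂ + λ∧β₂)², (ω₁ + λ∧β₁)∧(ω₂ + λ∧β₂)) (wedge products valued in Λ⁴ξ* ≅ ℝ via a fixed volume form, where λ and βᵢ are restricted to ξ) is surjective. -/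
/-- The wedge pairing `(ω, η) ↦ ω ∧ η ∈ Λ⁴ξ* ≅ ℝ` of two 2-forms on a 4-dimensional space
`ξ`, computed in a basis `e` (the fixed volume form is `e₀∧e₁∧e₂∧e₃`). -/
def wedgePairBasis {X : Type*} (e : Fin 4 → X) (f g : X → X → ℝ) : ℝ :=
  f (e 0) (e 1) * g (e 2) (e 3) - f (e 0) (e 2) * g (e 1) (e 3)
    + f (e 0) (e 3) * g (e 1) (e 2)
    + g (e 0) (e 1) * f (e 2) (e 3) - g (e 0) (e 2) * f (e 1) (e 3)
    + g (e 0) (e 3) * f (e 1) (e 2)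

/-!
Since `(λ∧β)² = 0` and `λ∧β₁∧λ∧β₂ = 0`, the map is affine:
`Ψ(β₁, β₂) = Ψ(0, 0) + (2 L₁β₁, 2 L₂β₂, L₁β₂ + L₂β₁)` with `Lᵢβ = ωᵢ∧λ∧β`.
It is therefore onto as soon as the functionals `L₁, L₂` on `ξ*` are linearly independent.
If `u L₁ + v L₂ = 0`, then, with `ω = u ω₁ + v ω₂`, the values of `β ↦ ω∧λ∧β` on the coordinate
functionals are the components of the 3-form `λ∧ω`, so `λ∧ω = 0`. Evaluating `λ∧ω` on `(z, x, y)`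
with `λ z ≠ 0` and `x, y ∈ ker λ` gives `λ(z) ω(x, y) = 0`: `ω` vanishes on `ker λ`,
and the hypothesis on the restrictions forces `u = v = 0`.
-/

theorem LinearMap.prod_surjective_of_linearIndependent {K M : Type*} [Field K] [AddCommGroup M]
    [Module K M] {f g : M →ₗ[K] K} (h : LinearIndependent K ![f, g]) :
    Function.Surjective (f.prod g) := by
  rw [← LinearMap.dualMap_injective_iff, ← LinearMap.ker_eq_bot, LinearMap.ker_eq_bot']
  intro ψ hψ
  obtain ⟨h₁, h₂⟩ := LinearIndependent.pair_iff.1 h (ψ (1, 0)) (ψ (0, 1)) <| by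
    ext x
    have hx : ((f x, g x) : K × K) = f x • (1, 0) + g x • (0, 1) := by
      simp only [Prod.smul_mk, smul_eq_mul, mul_one, mul_zero, Prod.mk_add_mk, add_zero, zero_add]
    have hψx := LinearMap.congr_fun hψ x
    rw [LinearMap.dualMap_apply, LinearMap.prod_apply, Function.prod, hx, map_add, map_smul,
      map_smul] at hψx
    simp only [LinearMap.add_apply, LinearMap.smul_apply, smul_eq_mul, LinearMap.zero_apply]
      at hψx ⊢
    linear_combination hψx
  ext <;> simp [h₁, h₂]

section FourDimensional

variable {X : Type*} [AddCommGroup X] [Module ℝ X]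

/-- The 3-form `l ∧ ω`. -/
def wedgeThreeForm (l : X →ₗ[ℝ] ℝ) (ω : X →ₗ[ℝ] X →ₗ[ℝ] ℝ) :
    X →ₗ[ℝ] X →ₗ[ℝ] X →ₗ[ℝ] ℝ where
  toFun z := LinearMap.mk₂ ℝ (fun x y => l z * ω x y - l x * ω z y + l y * ω z x)
    (by intros; simp only [map_add, LinearMap.add_apply]; ring)
    (by intros; simp only [map_smul, LinearMap.smul_apply, smul_eq_mul]; ring)
    (by intros; simp only [map_add]; ring)
    (by intros; simp only [map_smul, smul_eq_mul]; ring)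
  map_add' _ _ := by ext; simp only [map_add, LinearMap.add_apply, LinearMap.mk₂_apply]; ring
  map_smul' _ _ := by
    ext
    simp only [map_smul, LinearMap.smul_apply, LinearMap.mk₂_apply, smul_eq_mul,
      RingHom.id_apply]
    ring

theorem wedgeThreeForm_apply (l : X →ₗ[ℝ] ℝ) (ω : X →ₗ[ℝ] X →ₗ[ℝ] ℝ) (z x y : X) :
    wedgeThreeForm l ω z x y = l z * ω x y - l x * ω z y + l y * ω z x := rfl

/-- `wedgePairWedge e l ω β = ω ∧ l ∧ β`. -/
def wedgePairWedge (e : Fin 4 → X) (l : X →ₗ[ℝ] ℝ) :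
    (X →ₗ[ℝ] X →ₗ[ℝ] ℝ) →ₗ[ℝ] (X →ₗ[ℝ] ℝ) →ₗ[ℝ] ℝ :=
  LinearMap.mk₂ ℝ
    (fun ω β => wedgePairBasis e (fun x y => ω x y) (fun x y => l x * β y - l y * β x))
    (by intros; simp only [wedgePairBasis, LinearMap.add_apply]; ring)
    (by intros; simp only [wedgePairBasis, LinearMap.smul_apply, smul_eq_mul]; ring)
    (by intros; simp only [wedgePairBasis, LinearMap.add_apply]; ring)
    (by intros; simp only [wedgePairBasis, LinearMap.smul_apply, smul_eq_mul]; ring)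

theorem wedgePairBasis_add_wedge (e : Fin 4 → X) (l : X →ₗ[ℝ] ℝ) (ω η : X →ₗ[ℝ] X →ₗ[ℝ] ℝ)
    (β γ : X →ₗ[ℝ] ℝ) :
    wedgePairBasis e (fun x y => ω x y + (l x * β y - l y * β x))
        (fun x y => η x y + (l x * γ y - l y * γ x)) =
      wedgePairBasis e (fun x y => ω x y) (fun x y => η x y)
        + wedgePairWedge e l ω γ + wedgePairWedge e l η β := by
  simp only [wedgePairBasis, wedgePairWedge, LinearMap.mk₂_apply]
  ring

theorem wedgeThreeForm_eq_zero_of_wedgePairWedge_eq_zero (e : Module.Basis (Fin 4) ℝ X)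
    (l : X →ₗ[ℝ] ℝ) {ω : X →ₗ[ℝ] X →ₗ[ℝ] ℝ} (hω : ω.IsAlt)
    (h : wedgePairWedge e l ω = 0) : wedgeThreeForm l ω = 0 := by
  -- `β = e.coord k` picks out the component of `l ∧ ω` on the indices other than `k`.
  have hT : ∀ k, wedgePairWedge e l ω (e.coord k) = 0 := fun k => by simp [h]
  have h0 := hT 0; have h1 := hT 1; have h2 := hT 2; have h3 := hT 3
  simp +decide only [wedgePairWedge, LinearMap.mk₂_apply, wedgePairBasis,
    Module.Basis.coord_apply, Module.Basis.repr_self, Finsupp.single_apply, if_true, if_false,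
    mul_one, mul_zero, sub_zero, zero_sub] at h0 h1 h2 h3
  refine e.ext fun i => e.ext fun j => e.ext fun k => ?_
  fin_cases i <;> fin_cases j <;> fin_cases k <;>
    simp only [wedgeThreeForm_apply, LinearMap.zero_apply, Fin.zero_eta, Fin.mk_one,
      Fin.reduceFinMk, hω.self_eq_zero, ← hω.neg (e 0) (e 1), ← hω.neg (e 0) (e 2),
      ← hω.neg (e 0) (e 3), ← hω.neg (e 1) (e 2), ← hω.neg (e 1) (e 3),
      ← hω.neg (e 2) (e 3)] <;>
    linarith

theorem eq_zero_of_wedgePairWedge_eq_zero (e : Module.Basis (Fin 4) ℝ X) {l : X →ₗ[ℝ] ℝ}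
    (hl : l ≠ 0) {ω : X →ₗ[ℝ] X →ₗ[ℝ] ℝ} (hω : ω.IsAlt) (h : wedgePairWedge e l ω = 0)
    {x y : X} (hx : l x = 0) (hy : l y = 0) : ω x y = 0 := by
  obtain ⟨z, hz⟩ := DFunLike.ne_iff.1 hl
  have hT : wedgeThreeForm l ω z x y = 0 := by
    rw [wedgeThreeForm_eq_zero_of_wedgePairWedge_eq_zero e l hω h]; rfl
  rw [wedgeThreeForm_apply, hx, hy, zero_mul, zero_mul, sub_zero, add_zero] at hT
  exact (mul_eq_zero.1 hT).resolve_left hz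

theorem linearIndependent_wedgePairWedge (e : Module.Basis (Fin 4) ℝ X) {l : X →ₗ[ℝ] ℝ}
    (hl : l ≠ 0) {ω₁ ω₂ : X →ₗ[ℝ] X →ₗ[ℝ] ℝ} (h₁ : ω₁.IsAlt) (h₂ : ω₂.IsAlt)
    (hker : ∀ a b : ℝ,
      (∀ x y : X, l x = 0 → l y = 0 → a * ω₁ x y + b * ω₂ x y = 0) → a = 0 ∧ b = 0) :
    LinearIndependent ℝ ![wedgePairWedge e l ω₁, wedgePairWedge e l ω₂] := by
  refine LinearIndependent.pair_iff.2 fun a b hab => hker a b fun x y hx hy => ?_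
  have hω : (a • ω₁ + b • ω₂).IsAlt := fun x => by simp [h₁.self_eq_zero, h₂.self_eq_zero]
  have hW : wedgePairWedge e l (a • ω₁ + b • ω₂) = 0 := by
    rwa [map_add, map_smul, map_smul]
  simpa using eq_zero_of_wedgePairWedge_eq_zero e hl hω hW hx hy

theorem surjective_wedgePairBasis_add_wedge (e : Module.Basis (Fin 4) ℝ X) {l : X →ₗ[ℝ] ℝ}
    (hl : l ≠ 0) {ω₁ ω₂ : X →ₗ[ℝ] X →ₗ[ℝ] ℝ} (h₁ : ω₁.IsAlt) (h₂ : ω₂.IsAlt)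
    (hker : ∀ a b : ℝ,
      (∀ x y : X, l x = 0 → l y = 0 → a * ω₁ x y + b * ω₂ x y = 0) → a = 0 ∧ b = 0) :
    Function.Surjective (fun β : (X →ₗ[ℝ] ℝ) × (X →ₗ[ℝ] ℝ) =>
      ((wedgePairBasis e (fun x y : X => ω₁ x y + (l x * β.1 y - l y * β.1 x))
          (fun x y : X => ω₁ x y + (l x * β.1 y - l y * β.1 x)),
        wedgePairBasis e (fun x y : X => ω₂ x y + (l x * β.2 y - l y * β.2 x))
          (fun x y : X => ω₂ x y + (l x * β.2 y - l y * β.2 x)),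
        wedgePairBasis e (fun x y : X => ω₁ x y + (l x * β.1 y - l y * β.1 x))
          (fun x y : X => ω₂ x y + (l x * β.2 y - l y * β.2 x))) : ℝ × ℝ × ℝ)) := by
  rintro ⟨A, B, C⟩
  have hsurj := LinearMap.prod_surjective_of_linearIndependent
    (linearIndependent_wedgePairWedge e hl h₁ h₂ hker)
  let Q (ω η : X →ₗ[ℝ] X →ₗ[ℝ] ℝ) : ℝ := wedgePairBasis e (fun x y => ω x y) (fun x y => η x y)
  obtain ⟨β₁, hβ₁⟩ := hsurj ((A - Q ω₁ ω₁) / 2, 0)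
  obtain ⟨β₂, hβ₂⟩ := hsurj (C - Q ω₁ ω₂, (B - Q ω₂ ω₂) / 2)
  simp only [Q, LinearMap.prod_apply, Function.prod, Prod.mk.injEq] at hβ₁ hβ₂
  refine ⟨(β₁, β₂), ?_⟩
  simp only [wedgePairBasis_add_wedge, Prod.mk.injEq]
  exact ⟨by linarith [hβ₁.1], by linarith [hβ₂.2], by linarith [hβ₁.2, hβ₂.1]⟩

end FourDimensional

theorem stmt19_general {V : Type*} [AddCommGroup V] [Module ℝ V]
    (ξ : Submodule ℝ V) (e : Module.Basis (Fin 4) ℝ ξ)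
    (l : V →ₗ[ℝ] ℝ) (hl : ∃ v ∈ ξ, l v ≠ 0)
    (ω₁ ω₂ : ξ →ₗ[ℝ] ξ →ₗ[ℝ] ℝ)
    (h₁ : ∀ x : ξ, ω₁ x x = 0) (h₂ : ∀ x : ξ, ω₂ x x = 0)
    (hindker : ∀ a b : ℝ,
      (∀ x y : ξ, l x = 0 → l y = 0 → a * ω₁ x y + b * ω₂ x y = 0) → a = 0 ∧ b = 0) :
    Function.Surjective (fun β : (ξ →ₗ[ℝ] ℝ) × (ξ →ₗ[ℝ] ℝ) =>
      ((wedgePairBasis e (fun x y : ξ => ω₁ x y + (l x * β.1 y - l y * β.1 x))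
          (fun x y : ξ => ω₁ x y + (l x * β.1 y - l y * β.1 x)),
        wedgePairBasis e (fun x y : ξ => ω₂ x y + (l x * β.2 y - l y * β.2 x))
          (fun x y : ξ => ω₂ x y + (l x * β.2 y - l y * β.2 x)),
        wedgePairBasis e (fun x y : ξ => ω₁ x y + (l x * β.1 y - l y * β.1 x))
          (fun x y : ξ => ω₂ x y + (l x * β.2 y - l y * β.2 x))) : ℝ × ℝ × ℝ)) := by
  obtain ⟨v, hv, hlv⟩ := hl
  have hl' : l ∘ₗ ξ.subtype ≠ 0 := fun h => hlv (LinearMap.congr_fun h ⟨v, hv⟩)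
  exact surjective_wedgePairBasis_add_wedge e hl' h₁ h₂ hindker

/-- let `V` be a 5-dimensional real vector space, `ξ ⊆ V` a 4-dimensional
subspace (with a volume form given by a basis `e`), `λ ∈ V*` with `λ|_ξ ≠ 0`, and
`ω₁, ω₂` linearly independent 2-forms on `ξ` whose restrictions to the 3-dimensional
hyperplane `ξ ∩ ker λ` are still linearly independent.  Then the affine map
`Ψ : ξ* × ξ* → ℝ³` sending `(β₁, β₂)` to
`((ω₁+λ∧β₁)², (ω₂+λ∧β₂)², (ω₁+λ∧β₁)∧(ω₂+λ∧β₂))` (wedges valued in `Λ⁴ξ* ≅ ℝ`)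
is surjective. -/
theorem stmt19 {V : Type*} [AddCommGroup V] [Module ℝ V]
    (hV : Module.finrank ℝ V = 5)
    (ξ : Submodule ℝ V) (hξ : Module.finrank ℝ ξ = 4) (e : Module.Basis (Fin 4) ℝ ξ)
    (l : V →ₗ[ℝ] ℝ) (hl : ∃ v ∈ ξ, l v ≠ 0)
    (ω₁ ω₂ : ξ →ₗ[ℝ] ξ →ₗ[ℝ] ℝ)
    (h₁ : ∀ x : ξ, ω₁ x x = 0) (h₂ : ∀ x : ξ, ω₂ x x = 0)
    (hind : ∀ a b : ℝ, a • ω₁ + b • ω₂ = 0 → a = 0 ∧ b = 0)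
    (hindker : ∀ a b : ℝ,
      (∀ x y : ξ, l x = 0 → l y = 0 → a * ω₁ x y + b * ω₂ x y = 0) → a = 0 ∧ b = 0) :
    Function.Surjective (fun β : (ξ →ₗ[ℝ] ℝ) × (ξ →ₗ[ℝ] ℝ) =>
      ((wedgePairBasis e (fun x y : ξ => ω₁ x y + (l x * β.1 y - l y * β.1 x))
          (fun x y : ξ => ω₁ x y + (l x * β.1 y - l y * β.1 x)),
        wedgePairBasis e (fun x y : ξ => ω₂ x y + (l x * β.2 y - l y * β.2 x))
          (fun x y : ξ => ω₂ x y + (l x * β.2 y - l y * β.2 x)),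
        wedgePairBasis e (fun x y : ξ => ω₁ x y + (l x * β.1 y - l y * β.1 x))
          (fun x y : ξ => ω₂ x y + (l x * β.2 y - l y * β.2 x))) : ℝ × ℝ × ℝ)) :=
  stmt19_general ξ e l hl ω₁ ω₂ h₁ h₂ hindker
end
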